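/- (Merging a perfect chain yields an exact match anchor) Let Q and T be strings and let a = ([q_s..q_e],[t_s..t_e]) and a' = ([q_s'..q_e'],[t_s'..t_e']) be exact match anchors between Q and T with a ≺ a' and connect(a,a') = 0. Then a·a' := ([q_s..q_e'],[t_s..t_e']) is also an exact match anchor between Q and T. -/
import Mathlib


/-- An anchor: a pair of integer intervals `([qs..qe],[ts..te])`. -/
structure Anchor where
  qs : ℤ
  qe : ℤ
  ts : ℤ
  te : ℤ
deriving DecidableEq

/-- `a` is a well-formed anchor: nonempty intervals satisfying the
    exact-match invariant `qe - qs = te - ts`. -/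
def Anchor.Valid (a : Anchor) : Prop :=
  a.qs ≤ a.qe ∧ a.ts ≤ a.te ∧ a.qe - a.qs = a.te - a.ts

/-- Strict precedence `a ≺ a'`. -/
def strictPrec (a a' : Anchor) : Prop :=
  a.qs ≤ a'.qs ∧ a.qe ≤ a'.qe ∧ a.ts ≤ a'.ts ∧ a.te ≤ a'.te ∧
    (a.qs < a'.qs ∨ a.qe < a'.qe ∨ a.ts < a'.ts ∨ a.te < a'.te)

/-- Weak precedence `a ≺_w a'`. -/
def weakPrec (a a' : Anchor) : Prop :=
  a.qs ≤ a'.qs ∧ a.ts ≤ a'.ts ∧ (a.qs < a'.qs ∨ a.ts < a'.ts)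

/-- Strong (ChainX) precedence `a ≺_X a'`. -/
def chainxPrec (a a' : Anchor) : Prop :=
  a.qs < a'.qs ∧ a.qe < a'.qe ∧ a.ts < a'.ts ∧ a.te < a'.te

/-- Gap cost `gap(a,a') = max(0, qs' - qe - 1, ts' - te - 1)`. -/
def gapCost (a a' : Anchor) : ℤ :=
  max 0 (max (a'.qs - a.qe - 1) (a'.ts - a.te - 1))

/-- Overlap cost `o(a,a') = |max(0, qe - qs' + 1) - max(0, te - ts' + 1)|`. -/
def ovCost (a a' : Anchor) : ℤ :=
  |max 0 (a.qe - a'.qs + 1) - max 0 (a.te - a'.ts + 1)|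

/-- `connect(a,a') = gap(a,a') + o(a,a')`. -/
def connectCost (a a' : Anchor) : ℤ := gapCost a a' + ovCost a a'

/-- The diagonal of an anchor: `diag(a) = qs - ts`. -/
def Anchor.diag (a : Anchor) : ℤ := a.qs - a.ts


/-- `a` is an exact match anchor between (1-indexed) strings `Q` and `T`:
    the intervals are within bounds, nonempty, have equal length, and the
    corresponding characters match. -/
def IsEMA {α : Type*} (Q T : List α) (a : Anchor) : Prop :=
  1 ≤ a.qs ∧ a.qs ≤ a.qe ∧ a.qe ≤ Q.length ∧
  1 ≤ a.ts ∧ a.ts ≤ a.te ∧ a.te ≤ T.length ∧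
  a.qe - a.qs = a.te - a.ts ∧
  ∀ k : ℤ, 0 ≤ k → k ≤ a.qe - a.qs →
    Q[(a.qs + k - 1).toNat]? = T[(a.ts + k - 1).toNat]?

/-- Merging two anchors that form a perfect chain yields an exact match anchor. -/
theorem merge_perfect_chain_isEMA {α : Type*} (Q T : List α) (a a' : Anchor)
    (ha : IsEMA Q T a) (ha' : IsEMA Q T a')
    (hprec : strictPrec a a') (hconn : connectCost a a' = 0) :
    IsEMA Q T ⟨a.qs, a'.qe, a.ts, a'.te⟩ := by
  obtain ⟨hq1, hq2, hq3, ht1, ht2, ht3, hlen, hmatch⟩ := ha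
  obtain ⟨hq1', hq2', hq3', ht1', ht2', ht3', hlen', hmatch'⟩ := ha'
  obtain ⟨hp1, hp2, hp3, hp4, -⟩ := hprec
  -- gap = 0 and overlap = 0
  have hgap0 : gapCost a a' = 0 := by
    have h1 : 0 ≤ gapCost a a' := le_max_left _ _
    have h2 : 0 ≤ ovCost a a' := abs_nonneg _
    unfold connectCost at hconn; linarith
  have hov0 : ovCost a a' = 0 := by
    have h1 : 0 ≤ gapCost a a' := le_max_left _ _
    unfold connectCost at hconn; linarith
  have hqg : a'.qs ≤ a.qe + 1 := by
    have : a'.qs - a.qe - 1 ≤ max 0 (max (a'.qs - a.qe - 1) (a'.ts - a.te - 1)) :=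
      le_trans (le_max_left _ _) (le_max_right _ _)
    rw [show max 0 (max (a'.qs - a.qe - 1) (a'.ts - a.te - 1)) = gapCost a a' from rfl,
      hgap0] at this
    linarith
  have htg : a'.ts ≤ a.te + 1 := by
    have : a'.ts - a.te - 1 ≤ max 0 (max (a'.qs - a.qe - 1) (a'.ts - a.te - 1)) :=
      le_trans (le_max_right _ _) (le_max_right _ _)
    rw [show max 0 (max (a'.qs - a.qe - 1) (a'.ts - a.te - 1)) = gapCost a a' from rfl,
      hgap0] at this
    linarith
  have hov : max 0 (a.qe - a'.qs + 1) = max 0 (a.te - a'.ts + 1) := by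
    have := abs_eq_zero.mp hov0
    linarith
  have hmq : max 0 (a.qe - a'.qs + 1) = a.qe - a'.qs + 1 := max_eq_right (by linarith)
  have hmt : max 0 (a.te - a'.ts + 1) = a.te - a'.ts + 1 := max_eq_right (by linarith)
  -- same diagonal
  have hdiag : a.qs - a.ts = a'.qs - a'.ts := by
    rw [hmq, hmt] at hov; linarith
  refine ⟨hq1, by linarith, hq3', ht1, by linarith, ht3', by linarith, ?_⟩
  intro k hk0 hk1
  by_cases hc : k ≤ a.qe - a.qs
  · exact hmatch k hk0 hc
  · push_neg at hc
    have hk0' : 0 ≤ a.qs + k - a'.qs := by linarith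
    have hk1' : a.qs + k - a'.qs ≤ a'.qe - a'.qs := by
      simp only at hk1; linarith
    have := hmatch' (a.qs + k - a'.qs) hk0' hk1'
    have e1 : a'.qs + (a.qs + k - a'.qs) - 1 = a.qs + k - 1 := by ring
    have e2 : a'.ts + (a.qs + k - a'.qs) - 1 = a.ts + k - 1 := by
      have d' : a'.qe - a'.qs = a'.te - a'.ts := hlen'
      linarith
    rw [e1, e2] at this
    exact this
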